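/- arXiv:1307.7534 — 4 statements merged into one kernel-verified Lean document; each statement's English description precedes it below -/
import Mathlib

section
/- Let B = [b_1,…,b_n] be a lattice basis and 1 ≤ k < n. Then the swap of adjacent vectors satisfies Pot(σ_{k,k+1} B) = (‖π_k(b_{k+1})‖² / ‖π_k(b_k)‖²) · Pot(B). -/
open Finset

/-- π_j : orthogonal projection onto the orthogonal complement of span{b_0,…,b_{j-1}}. -/
noncomputable def projPerp {n m : ℕ} (b : Fin n → EuclideanSpace ℝ (Fin m)) (j : ℕ)
    (x : EuclideanSpace ℝ (Fin m)) : EuclideanSpace ℝ (Fin m) :=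
  x - (Submodule.orthogonalProjectionOnto (Submodule.span ℝ (b '' {i | (i : ℕ) < j})) x : EuclideanSpace ℝ (Fin m))

/-- The Gram–Schmidt vector b_i^* = π_i(b_i). -/
noncomputable def bstar {n m : ℕ} (b : Fin n → EuclideanSpace ℝ (Fin m)) (i : Fin n) :
    EuclideanSpace ℝ (Fin m) :=
  projPerp b i.val (b i)

/-- The potential Pot(B) = ∏ ‖b_i^*‖^{2(n-i+1)} (1-based), i.e. ∏ ‖b_i^*‖^{2(n-i)} (0-based). -/
noncomputable def Pot {n m : ℕ} (b : Fin n → EuclideanSpace ℝ (Fin m)) : ℝ :=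
  ∏ i : Fin n, ‖bstar b i‖ ^ (2 * (n - i.val))

/-- Gram–Schmidt coefficient μ_{i,j} = ⟨b_i, b_j^*⟩ / ⟨b_j^*, b_j^*⟩. -/
noncomputable def mu {n m : ℕ} (b : Fin n → EuclideanSpace ℝ (Fin m)) (i j : Fin n) : ℝ :=
  (inner ℝ (b i) (bstar b j) : ℝ) / (inner ℝ (bstar b j) (bstar b j) : ℝ)

/-- Size-reduced: |μ_{i,j}| ≤ 1/2 for all j < i. -/
def SizeReduced {n m : ℕ} (b : Fin n → EuclideanSpace ℝ (Fin m)) : Prop :=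
  ∀ i j : Fin n, j < i → |mu b i j| ≤ 1/2

/-- The deep-insertion reordering σ_{k,ℓ}B = [b_1,…,b_{k-1}, b_ℓ, b_k,…,b_{ℓ-1}, b_{ℓ+1},…,b_n]. -/
def insertFam {n : ℕ} {α : Type*} (b : Fin n → α) (k l : Fin n) : Fin n → α :=
  fun i => if i.val < k.val ∨ l.val < i.val then b i
    else if i = k then b l
    else b ⟨i.val - 1, lt_of_le_of_lt (Nat.sub_le _ _) i.isLt⟩

/-!
Swapping `b_k` and `b_{k+1}` does not change `span {b_1, …, b_j}` for `j ≠ k`, so only the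
Gram–Schmidt vectors at positions `k` and `k + 1` change. The new `k`-th one is
`v = π_k(b_{k+1})`, and with `u = π_k(b_k)` one step of Gram–Schmidt gives
`‖b_k^*‖² ‖b_{k+1}^*‖² = ‖u‖² ‖v‖² - ⟪u, v⟫²`, which is symmetric in `u` and `v`. Hence the
product of the two affected squared norms is preserved, and comparing their exponents
`n - k + 1` and `n - k` in `Pot` leaves the factor `‖v‖² / ‖u‖²`.
-/

open scoped RealInnerProductSpace

theorem sq_norm_mul_sq_norm_sub_smul {F : Type*} [NormedAddCommGroup F] [InnerProductSpace ℝ F]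
    (u v : F) :
    ‖u‖ ^ 2 * ‖v - (⟪u, v⟫ / ‖u‖ ^ 2) • u‖ ^ 2 = ‖u‖ ^ 2 * ‖v‖ ^ 2 - ⟪u, v⟫ ^ 2 := by
  rcases eq_or_ne u 0 with rfl | hu
  · simp
  have hu2 : ‖u‖ ^ 2 ≠ 0 := pow_ne_zero _ (norm_ne_zero_iff.2 hu)
  rw [norm_sub_sq_real, inner_smul_right, norm_smul, mul_pow, Real.norm_eq_abs, sq_abs,
    real_inner_comm v u]
  field_simp
  ring

theorem pow_succ_mul_pow_mul_eq_div_mul {U V W W' P : ℝ} {e : ℕ} (he : e ≠ 0)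
    (h : V * W' = U * W) :
    V ^ (e + 1) * W' ^ e * P = V / U * (U ^ (e + 1) * W ^ e * P) := by
  have hV : V ^ (e + 1) * W' ^ e = V * (U * W) ^ e := by rw [← h]; ring
  rcases eq_or_ne U 0 with rfl | hU
  -- the right side is `V / 0 * _ = 0`; the left one vanishes because `V * W' = 0` and `e ≠ 0`
  · simp only [zero_mul, zero_pow he, mul_zero] at hV
    simp [hV]
  · rw [hV]
    field_simp
    ring

theorem insertFam_of_val_eq_succ {n : ℕ} {α : Type*} (b : Fin n → α) {k l : Fin n}
    (hkl : (l : ℕ) = k + 1) : insertFam b k l = b ∘ Equiv.swap k l := by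
  funext i
  simp only [insertFam, Function.comp_apply, Equiv.swap_apply_def]
  split_ifs <;> grind [Fin.ext_iff]

theorem swap_image_setOf_val_lt {n : ℕ} {k l : Fin n} {j : ℕ} (h : (k : ℕ) < j ↔ (l : ℕ) < j) :
    Equiv.swap k l '' {i : Fin n | (i : ℕ) < j} = {i : Fin n | (i : ℕ) < j} := by
  ext i
  rw [Set.mem_image_equiv, Equiv.symm_swap, Set.mem_ofPred_eq,
    Set.mem_ofPred_eq, Equiv.swap_apply_def]
  split_ifs with hk hl
  · rw [hk]; exact h.symm
  · rw [hl]; exact h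
  · rfl

section GramSchmidt

variable {m n : ℕ} (b : Fin n → EuclideanSpace ℝ (Fin m))

theorem sub_projPerp_mem_span (j : ℕ) (x : EuclideanSpace ℝ (Fin m)) :
    x - projPerp b j x ∈ Submodule.span ℝ (b '' {i | (i : ℕ) < j}) := by
  rw [projPerp, sub_sub_cancel]
  exact Submodule.coe_mem _

theorem projPerp_mem_orthogonal (j : ℕ) (x : EuclideanSpace ℝ (Fin m)) :
    projPerp b j x ∈ (Submodule.span ℝ (b '' {i | (i : ℕ) < j}))ᗮ :=
  Submodule.sub_starProjection_mem_orthogonal x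

theorem projPerp_eq_of_sub_mem_of_mem_orthogonal {j : ℕ} {x w : EuclideanSpace ℝ (Fin m)}
    (hsub : x - w ∈ Submodule.span ℝ (b '' {i | (i : ℕ) < j}))
    (horth : w ∈ (Submodule.span ℝ (b '' {i | (i : ℕ) < j}))ᗮ) :
    projPerp b j x = w := by
  rw [projPerp, Submodule.coe_orthogonalProjectionOnto_apply,
    Submodule.eq_starProjection_of_mem_orthogonal hsub (by rwa [sub_sub_cancel]), sub_sub_cancel]

theorem projPerp_succ (j : Fin n) (y : EuclideanSpace ℝ (Fin m)) :
    projPerp b (j + 1) y = projPerp b j y -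
      (⟪projPerp b j (b j), projPerp b j y⟫ / ‖projPerp b j (b j)‖ ^ 2) • projPerp b j (b j) := by
  set u := projPerp b j (b j)
  set v := projPerp b j y
  set c := ⟪u, v⟫ / ‖u‖ ^ 2
  have hS : b '' {i | (i : ℕ) < j + 1} = insert (b j) (b '' {i | (i : ℕ) < j}) := by
    rw [← Set.image_insert_eq]
    congr 1
    ext i
    simp only [Set.mem_insert_iff, Set.mem_ofPred_eq, Fin.ext_iff]
    omega
  have hu := sub_projPerp_mem_span b j (b j)
  have hv := sub_projPerp_mem_span b j y
  have hvu : v - c • u ∈ (ℝ ∙ u)ᗮ := by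
    have := Submodule.starProjection_singleton ℝ (v := u) v
    rw [RCLike.ofReal_real_eq_id, id] at this
    rw [← this]
    exact Submodule.sub_starProjection_mem_orthogonal v
  have horth : v - c • u ∈ (Submodule.span ℝ (b '' {i | (i : ℕ) < j}))ᗮ :=
    sub_mem (projPerp_mem_orthogonal b j y) (Submodule.smul_mem _ _ (projPerp_mem_orthogonal b j _))
  apply projPerp_eq_of_sub_mem_of_mem_orthogonal
  · rw [hS, Submodule.span_insert,
      show y - (v - c • u) = (y - v) + c • (b j - (b j - u)) by rw [sub_sub_cancel]; abel]
    exact add_mem (Submodule.mem_sup_right hv) (Submodule.smul_mem _ _ (sub_mem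
      (Submodule.mem_sup_left (Submodule.mem_span_singleton_self _)) (Submodule.mem_sup_right hu)))
  · rw [hS, Submodule.span_insert, ← Submodule.inf_orthogonal]
    refine ⟨Submodule.mem_orthogonal_singleton_iff_inner_right.2 ?_, horth⟩
    rw [← sub_add_cancel (b j) u, inner_add_left, Submodule.inner_right_of_mem_orthogonal hu horth,
      Submodule.mem_orthogonal_singleton_iff_inner_right.1 hvu, add_zero]

theorem projPerp_comp_swap {k l : Fin n} {j : ℕ} (h : (k : ℕ) < j ↔ (l : ℕ) < j) :
    projPerp (b ∘ Equiv.swap k l) j = projPerp b j := by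
  have himage : (b ∘ Equiv.swap k l) '' {i | (i : ℕ) < j} = b '' {i | (i : ℕ) < j} := by
    rw [Set.image_comp, swap_image_setOf_val_lt h]
  funext x
  apply projPerp_eq_of_sub_mem_of_mem_orthogonal
  · rw [himage]; exact sub_projPerp_mem_span b j x
  · rw [himage]; exact projPerp_mem_orthogonal b j x

variable {k l : Fin n}

theorem bstar_comp_swap_of_ne (hkl : (l : ℕ) = k + 1) {i : Fin n} (hik : i ≠ k) (hil : i ≠ l) :
    bstar (b ∘ Equiv.swap k l) i = bstar b i := by
  have hik' : (i : ℕ) ≠ k := Fin.val_ne_of_ne hik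
  have hil' : (i : ℕ) ≠ l := Fin.val_ne_of_ne hil
  rw [bstar, bstar, projPerp_comp_swap b (by omega), Function.comp_apply,
    Equiv.swap_apply_of_ne_of_ne hik hil]

theorem bstar_comp_swap_left (hkl : (l : ℕ) = k + 1) :
    bstar (b ∘ Equiv.swap k l) k = projPerp b k (b l) := by
  rw [bstar, projPerp_comp_swap b (by omega), Function.comp_apply, Equiv.swap_apply_left]

theorem bstar_comp_swap_right (hkl : (l : ℕ) = k + 1) :
    bstar (b ∘ Equiv.swap k l) l = projPerp b k (b k) -
      (⟪projPerp b k (b l), projPerp b k (b k)⟫ / ‖projPerp b k (b l)‖ ^ 2) •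
        projPerp b k (b l) := by
  rw [bstar, hkl, projPerp_succ, projPerp_comp_swap b (by omega), Function.comp_apply,
    Function.comp_apply, Equiv.swap_apply_left, Equiv.swap_apply_right]

theorem bstar_of_val_eq_succ (hkl : (l : ℕ) = k + 1) :
    bstar b l = projPerp b k (b l) -
      (⟪projPerp b k (b k), projPerp b k (b l)⟫ / ‖projPerp b k (b k)‖ ^ 2) •
        projPerp b k (b k) := by
  rw [bstar, hkl, projPerp_succ]

theorem norm_bstar_comp_swap_mul (hkl : (l : ℕ) = k + 1) :
    ‖bstar (b ∘ Equiv.swap k l) k‖ ^ 2 * ‖bstar (b ∘ Equiv.swap k l) l‖ ^ 2 =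
      ‖bstar b k‖ ^ 2 * ‖bstar b l‖ ^ 2 := by
  rw [bstar_comp_swap_left b hkl, bstar_comp_swap_right b hkl, bstar_of_val_eq_succ b hkl,
    sq_norm_mul_sq_norm_sub_smul, bstar, sq_norm_mul_sq_norm_sub_smul, real_inner_comm]
  ring

theorem pot_eq_mul_mul_prod (hkl : (l : ℕ) = k + 1) :
    Pot b = (‖bstar b k‖ ^ 2) ^ (n - l + 1) * (‖bstar b l‖ ^ 2) ^ (n - l) *
      ∏ i ∈ (univ.erase k).erase l, ‖bstar b i‖ ^ (2 * (n - i)) := by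
  have hlk : l ≠ k := fun h => by simp [h] at hkl
  rw [Pot, ← mul_prod_erase _ _ (mem_univ k), ← mul_prod_erase _ _ (mem_erase.2 ⟨hlk, mem_univ l⟩),
    ← pow_mul, ← pow_mul, ← mul_assoc, show n - k = n - l + 1 by omega]

end GramSchmidt

theorem pot_swap_general {n m : ℕ} (b : Fin n → EuclideanSpace ℝ (Fin m))
    (k : ℕ) (hk : k + 1 < n) :
    Pot (insertFam b ⟨k, Nat.lt_of_succ_lt hk⟩ ⟨k + 1, hk⟩) =
      (‖projPerp b k (b ⟨k + 1, hk⟩)‖ ^ 2 / ‖projPerp b k (b ⟨k, Nat.lt_of_succ_lt hk⟩)‖ ^ 2) *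
        Pot b := by
  set k₀ : Fin n := ⟨k, Nat.lt_of_succ_lt hk⟩
  set k₁ : Fin n := ⟨k + 1, hk⟩
  have hkl : (k₁ : ℕ) = k₀ + 1 := rfl
  have hrest : ∏ i ∈ (univ.erase k₀).erase k₁, ‖bstar (b ∘ Equiv.swap k₀ k₁) i‖ ^ (2 * (n - i)) =
      ∏ i ∈ (univ.erase k₀).erase k₁, ‖bstar b i‖ ^ (2 * (n - i)) := by
    refine prod_congr rfl fun i hi => ?_
    obtain ⟨hil, hik, -⟩ := mem_erase.1 hi |>.imp_right mem_erase.1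
    rw [bstar_comp_swap_of_ne b hkl hik hil]
  rw [insertFam_of_val_eq_succ b hkl, pot_eq_mul_mul_prod _ hkl, pot_eq_mul_mul_prod b hkl, hrest,
    ← bstar_comp_swap_left b hkl]
  exact pow_succ_mul_pow_mul_eq_div_mul (by simp [k₁]; omega) (norm_bstar_comp_swap_mul b hkl)

/-- Pot(σ_{k,k+1}B) = (‖π_k(b_{k+1})‖²/‖π_k(b_k)‖²) · Pot(B). -/
theorem pot_swap {n m : ℕ} (b : Fin n → EuclideanSpace ℝ (Fin m))
    (hLI : LinearIndependent ℝ b) (k : ℕ) (hk : k + 1 < n) :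
    Pot (insertFam b ⟨k, Nat.lt_of_succ_lt hk⟩ ⟨k + 1, hk⟩) =
      (‖projPerp b k (b ⟨k + 1, hk⟩)‖ ^ 2 / ‖projPerp b k (b ⟨k, Nat.lt_of_succ_lt hk⟩)‖ ^ 2) *
        Pot b :=
  pot_swap_general b k hk
end

section
/- For δ ∈ (4^{−1/(n−1)}, 1], every δ-DeepLLL reduced basis B of rank n is δ^{n−1}-PotLLL reduced. Concretely: if B is size-reduced and δ·‖π_k(b_k)‖² ≤ ‖π_k(b_ℓ)‖² holds for all 1 ≤ k < ℓ ≤ n, then δ^{n−1}·Pot(B) ≤ Pot(σ_{k,ℓ} B) for all 1 ≤ k < ℓ ≤ n. -/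
open Finset

/-!
Write `d_j = ∏_{i<j} ‖π_i(b_i)‖²`, so that `Pot(B) = ∏_{j=1}^{n} d_j`. Moving `b_ℓ` to position `k`
leaves `d_j` unchanged for `j ≤ k` and `j > ℓ`, while for `k < j ≤ ℓ` it replaces the last factor
`‖π_{j-1}(b_{j-1})‖²` of `d_j` by `‖π_{j-1}(b_ℓ)‖²`. This follows by induction on `j` from the
exchange identity `‖π_{K+ℝw}(v)‖² ‖π_K(w)‖² = ‖π_{K+ℝv}(w)‖² ‖π_K(v)‖²`, both sides being the Gram
determinant of `π_K(v), π_K(w)`. By the DeepLLL condition each replacement loses at most a factor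
`δ`, so `Pot(σ_{k,ℓ} B) ≥ δ^{ℓ-k} Pot(B) ≥ δ^{n-1} Pot(B)`.
-/

section Projection

open Submodule

variable {E : Type*} [NormedAddCommGroup E] [InnerProductSpace ℝ E]

theorem norm_sub_starProjection_span_singleton_sq_mul (x y : E) :
    ‖x - (ℝ ∙ y).starProjection x‖ ^ 2 * ‖y‖ ^ 2 = ‖x‖ ^ 2 * ‖y‖ ^ 2 - inner ℝ x y ^ 2 := by
  rcases eq_or_ne y 0 with rfl | hy
  · simp
  have hy' : ‖y‖ ≠ 0 := norm_ne_zero_iff.mpr hy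
  rw [starProjection_singleton, RCLike.ofReal_real_eq_id, id, norm_sub_sq_real, inner_smul_right,
    norm_smul, mul_pow, Real.norm_eq_abs, sq_abs, real_inner_comm y x]
  field_simp
  ring

theorem sub_starProjection_sup_span_singleton (K : Submodule ℝ E) (v w : E)
    [K.HasOrthogonalProjection] [(K ⊔ ℝ ∙ w).HasOrthogonalProjection] :
    v - (K ⊔ ℝ ∙ w).starProjection v
      = v - K.starProjection v
        - (ℝ ∙ (w - K.starProjection w)).starProjection (v - K.starProjection v) := by
  set pv := v - K.starProjection v
  set pw := w - K.starProjection w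
  set r := pv - (ℝ ∙ pw).starProjection pv
  have hpw_mem : pw ∈ K ⊔ ℝ ∙ w :=
    sub_mem (mem_sup_right (mem_span_singleton_self w))
      (mem_sup_left (K.starProjection_apply_mem w))
  have hr_perp_K : r ∈ Kᗮ :=
    sub_mem (K.sub_starProjection_mem_orthogonal v)
      ((span_singleton_le_iff_mem _ _).2 (K.sub_starProjection_mem_orthogonal w)
        ((ℝ ∙ pw).starProjection_apply_mem pv))
  have hr_perp_w : r ∈ (ℝ ∙ w)ᗮ := by
    rw [mem_orthogonal_singleton_iff_inner_right, ← add_sub_cancel (K.starProjection w) w,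
      inner_add_left, hr_perp_K _ (K.starProjection_apply_mem w), zero_add, real_inner_comm]
    exact starProjection_inner_eq_zero pv pw (mem_span_singleton_self pw)
  have hproj : (K ⊔ ℝ ∙ w).starProjection v = K.starProjection v + (ℝ ∙ pw).starProjection pv := by
    refine eq_starProjection_of_mem_orthogonal
      (add_mem (mem_sup_left (K.starProjection_apply_mem v))
        ((span_singleton_le_iff_mem _ _).2 hpw_mem ((ℝ ∙ pw).starProjection_apply_mem pv))) ?_
    rw [← inf_orthogonal, sub_add_eq_sub_sub]
    exact ⟨hr_perp_K, hr_perp_w⟩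
  rw [hproj, sub_add_eq_sub_sub]

theorem norm_sub_starProjection_sup_sq_mul_comm (K : Submodule ℝ E) (v w : E)
    [K.HasOrthogonalProjection] [(K ⊔ ℝ ∙ w).HasOrthogonalProjection]
    [(K ⊔ ℝ ∙ v).HasOrthogonalProjection] :
    ‖v - (K ⊔ ℝ ∙ w).starProjection v‖ ^ 2 * ‖w - K.starProjection w‖ ^ 2
      = ‖w - (K ⊔ ℝ ∙ v).starProjection w‖ ^ 2 * ‖v - K.starProjection v‖ ^ 2 := by
  rw [sub_starProjection_sup_span_singleton, sub_starProjection_sup_span_singleton,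
    norm_sub_starProjection_span_singleton_sq_mul, norm_sub_starProjection_span_singleton_sq_mul,
    real_inner_comm]
  ring

end Projection

section PrefixSpan

variable {n : ℕ} {E : Type*} [AddCommGroup E] [Module ℝ E]

def prefixSpan (b : Fin n → E) (j : ℕ) : Submodule ℝ E :=
  Submodule.span ℝ (b '' {i | (i : ℕ) < j})

theorem prefixSpan_congr {b c : Fin n → E} {j : ℕ} (h : ∀ i : Fin n, (i : ℕ) < j → c i = b i) :
    prefixSpan c j = prefixSpan b j :=
  congrArg _ (Set.image_congr fun i hi => h i hi)

theorem prefixSpan_succ (b : Fin n → E) {j : ℕ} (hj : j < n) :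
    prefixSpan b (j + 1) = prefixSpan b j ⊔ ℝ ∙ b ⟨j, hj⟩ := by
  have hset : {i : Fin n | (i : ℕ) < j + 1} = insert ⟨j, hj⟩ ({i | (i : ℕ) < j} : Set (Fin n)) := by
    ext i
    simp only [Set.mem_ofPred_eq, Set.mem_insert_iff, Fin.ext_iff]
    omega
  rw [prefixSpan, hset, Set.image_insert_eq, Submodule.span_insert, sup_comm, prefixSpan]

end PrefixSpan

section InsertFam

variable {n : ℕ} {α : Type*} (b : Fin n → α) {k l : Fin n}

theorem insertFam_of_lt {i : Fin n} (hi : i < k) : insertFam b k l i = b i :=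
  if_pos (Or.inl hi)

theorem insertFam_of_gt {i : Fin n} (hi : l < i) : insertFam b k l i = b i :=
  if_pos (Or.inr hi)

theorem insertFam_self (hkl : k ≤ l) : insertFam b k l k = b l := by
  simp [insertFam, Fin.not_lt.2 hkl]

theorem insertFam_succ {i : ℕ} (hki : (k : ℕ) ≤ i) (hil : i < (l : ℕ)) (hi : i + 1 < n) :
    insertFam b k l ⟨i + 1, hi⟩ = b ⟨i, by omega⟩ := by
  rw [insertFam, if_neg (by simp only; omega), if_neg (by simp only [Fin.ext_iff]; omega)]
  rfl

end InsertFam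

section InsertFamGeometry

variable {n m : ℕ} (b : Fin n → EuclideanSpace ℝ (Fin m)) {k l : Fin n}

theorem projPerp_eq_of_prefixSpan_eq {j : ℕ} {K : Submodule ℝ (EuclideanSpace ℝ (Fin m))}
    [K.HasOrthogonalProjection] (h : prefixSpan b j = K) (x : EuclideanSpace ℝ (Fin m)) :
    projPerp b j x = x - K.starProjection x := by
  subst h
  rfl

theorem projPerp_congr {c : Fin n → EuclideanSpace ℝ (Fin m)} {j : ℕ}
    (h : prefixSpan c j = prefixSpan b j) : projPerp c j = projPerp b j :=
  funext (projPerp_eq_of_prefixSpan_eq c h)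

theorem prefixSpan_insertFam_of_le {j : ℕ} (hj : j ≤ k) :
    prefixSpan (insertFam b k l) j = prefixSpan b j :=
  prefixSpan_congr fun i hi => insertFam_of_lt b (Fin.lt_def.2 (by omega))

theorem prefixSpan_insertFam_succ (hkl : k < l) {j : ℕ} (hkj : (k : ℕ) ≤ j) (hjl : j ≤ l) :
    prefixSpan (insertFam b k l) (j + 1) = prefixSpan b j ⊔ ℝ ∙ b l := by
  induction j, hkj using Nat.le_induction with
  | base =>
    rw [prefixSpan_succ _ k.isLt, prefixSpan_insertFam_of_le b le_rfl, Fin.eta,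
      insertFam_self b hkl.le]
  | succ j hkj ih =>
    rw [prefixSpan_succ _ (by omega), ih (by omega), insertFam_succ b hkj (by omega),
      prefixSpan_succ b (by omega), sup_right_comm]

theorem prefixSpan_insertFam_succ_of_ge (hkl : k < l) {j : ℕ} (hlj : (l : ℕ) ≤ j) (hj : j < n) :
    prefixSpan (insertFam b k l) (j + 1) = prefixSpan b (j + 1) := by
  induction j, hlj using Nat.le_induction with
  | base => rw [prefixSpan_insertFam_succ b hkl hkl.le le_rfl, prefixSpan_succ b l.isLt]
  | succ j hlj ih =>
    rw [prefixSpan_succ _ hj, ih (by omega),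
      insertFam_of_gt b (i := ⟨j + 1, hj⟩) (Fin.lt_def.2 (by simp only; omega)),
      prefixSpan_succ b hj]

end InsertFamGeometry

section PrefixGram

variable {n m : ℕ} (b : Fin n → EuclideanSpace ℝ (Fin m))

/-- The `d_j` of the LLL analysis, i.e. the Gram determinant of `b_0, …, b_{j-1}`. -/
noncomputable def prefixGram (j : ℕ) : ℝ :=
  ∏ i : Fin n with i.val < j, ‖bstar b i‖ ^ 2

theorem prefixGram_nonneg (j : ℕ) : 0 ≤ prefixGram b j :=
  Finset.prod_nonneg fun _ _ => sq_nonneg _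

theorem prefixGram_succ {j : ℕ} (hj : j < n) :
    prefixGram b (j + 1) = prefixGram b j * ‖projPerp b j (b ⟨j, hj⟩)‖ ^ 2 := by
  have hset : ({i | i.val < j + 1} : Finset (Fin n))
      = insert ⟨j, hj⟩ ({i | i.val < j} : Finset (Fin n)) := by
    ext i
    simp only [Finset.mem_filter_univ, Finset.mem_insert, Fin.ext_iff]
    omega
  rw [prefixGram, hset, Finset.prod_insert (by simp), mul_comm, prefixGram, bstar]

theorem prefixGram_congr {c : Fin n → EuclideanSpace ℝ (Fin m)} {j : ℕ}
    (h : ∀ i : Fin n, (i : ℕ) < j → c i = b i) : prefixGram c j = prefixGram b j := by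
  refine Finset.prod_congr rfl fun i hi => ?_
  have hi : (i : ℕ) < j := (Finset.mem_filter_univ i).1 hi
  rw [bstar, bstar, h i hi,
    projPerp_congr b (prefixSpan_congr fun i' hi' => h i' (by omega))]

theorem Pot_eq_prod_prefixGram : Pot b = ∏ j : Fin n, prefixGram b (j + 1) := by
  simp only [Pot, prefixGram, Finset.prod_filter]
  rw [Finset.prod_comm]
  refine Finset.prod_congr rfl fun i _ => ?_
  rw [← Finset.prod_filter, Finset.prod_const, pow_mul]
  congr 1
  rw [← Fin.card_Ici]
  congr 1
  ext j
  simp only [Finset.mem_filter_univ, Finset.mem_Ici, Fin.le_def]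
  omega

end PrefixGram

section PrefixGramInsertFam

variable {n m : ℕ} (b : Fin n → EuclideanSpace ℝ (Fin m)) {k l : Fin n}

theorem prefixGram_insertFam_of_le {j : ℕ} (hj : j ≤ k) :
    prefixGram (insertFam b k l) j = prefixGram b j :=
  prefixGram_congr b fun _ hi => insertFam_of_lt b (Fin.lt_def.2 (by omega))

theorem prefixGram_insertFam_succ (hkl : k < l) {j : ℕ} (hkj : (k : ℕ) ≤ j) (hjl : j ≤ l) :
    prefixGram (insertFam b k l) (j + 1) = prefixGram b j * ‖projPerp b j (b l)‖ ^ 2 := by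
  induction j, hkj using Nat.le_induction with
  | base =>
    rw [prefixGram_succ _ k.isLt, prefixGram_insertFam_of_le b le_rfl, Fin.eta,
      insertFam_self b hkl.le, projPerp_congr b (prefixSpan_insertFam_of_le b le_rfl)]
  | succ j hkj ih =>
    have hjn : j < n := by omega
    rw [prefixGram_succ _ (by omega), ih (by omega), insertFam_succ b hkj (by omega),
      projPerp_eq_of_prefixSpan_eq _ (prefixSpan_insertFam_succ b hkl hkj (by omega)),
      prefixGram_succ b hjn, projPerp_eq_of_prefixSpan_eq b (prefixSpan_succ b hjn),
      projPerp_eq_of_prefixSpan_eq b rfl, projPerp_eq_of_prefixSpan_eq b rfl]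
    linear_combination prefixGram b j *
      norm_sub_starProjection_sup_sq_mul_comm (prefixSpan b j) (b ⟨j, hjn⟩) (b l)

theorem prefixGram_insertFam_succ_of_ge (hkl : k < l) {j : ℕ} (hlj : (l : ℕ) ≤ j) (hj : j < n) :
    prefixGram (insertFam b k l) (j + 1) = prefixGram b (j + 1) := by
  induction j, hlj using Nat.le_induction with
  | base => rw [prefixGram_insertFam_succ b hkl hkl.le le_rfl, prefixGram_succ b l.isLt, Fin.eta]
  | succ j hlj ih =>
    rw [prefixGram_succ _ hj, ih (by omega),
      insertFam_of_gt b (i := ⟨j + 1, hj⟩) (Fin.lt_def.2 (by simp only; omega)),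
      projPerp_congr b (prefixSpan_insertFam_succ_of_ge b hkl hlj (by omega)), prefixGram_succ b hj]

theorem pow_mul_Pot_le_Pot_insertFam (hkl : k < l) {δ : ℝ} (hδ : 0 ≤ δ)
    (hdeep : ∀ j : Fin n, k ≤ j → j < l →
      δ * ‖projPerp b j (b j)‖ ^ 2 ≤ ‖projPerp b j (b l)‖ ^ 2) :
    δ ^ ((l : ℕ) - k) * Pot b ≤ Pot (insertFam b k l) := by
  have hfactor : ∀ j : Fin n,
      (if j ∈ Finset.Ico k l then δ else 1) * prefixGram b (j + 1)
        ≤ prefixGram (insertFam b k l) (j + 1) := by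
    intro j
    rcases lt_or_ge j k with hjk | hkj
    · rw [if_neg (by simp [Fin.not_le.2 hjk]), one_mul,
        prefixGram_insertFam_of_le b (Fin.lt_def.1 hjk)]
    rcases lt_or_ge j l with hjl | hlj
    · rw [if_pos (Finset.mem_Ico.2 ⟨hkj, hjl⟩), prefixGram_succ b j.isLt,
        prefixGram_insertFam_succ b hkl hkj hjl.le, Fin.eta, mul_left_comm]
      exact mul_le_mul_of_nonneg_left (hdeep j hkj hjl) (prefixGram_nonneg b j)
    · rw [if_neg (by simp [Fin.not_lt.2 hlj]), one_mul,
        prefixGram_insertFam_succ_of_ge b hkl hlj j.isLt]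
  calc δ ^ ((l : ℕ) - k) * Pot b
      = ∏ j : Fin n, (if j ∈ Finset.Ico k l then δ else 1) * prefixGram b (j + 1) := by
        rw [Finset.prod_mul_distrib, Finset.prod_ite_mem, Finset.univ_inter, Finset.prod_const,
          Fin.card_Ico, Pot_eq_prod_prefixGram]
    _ ≤ ∏ j : Fin n, prefixGram (insertFam b k l) (j + 1) :=
        Finset.prod_le_prod (fun j _ => mul_nonneg (by split_ifs <;> positivity)
          (prefixGram_nonneg b _)) fun j _ => hfactor j
    _ = Pot (insertFam b k l) := (Pot_eq_prod_prefixGram _).symm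

end PrefixGramInsertFam

theorem deepLLL_is_potLLL_general {n m : ℕ} (b : Fin n → EuclideanSpace ℝ (Fin m))
    (δ : ℝ)
    (hδ1 : (4 : ℝ) ^ (-(1 : ℝ) / ((n : ℝ) - 1)) < δ) (hδ2 : δ ≤ 1)
    (hdeep : ∀ k l : Fin n, k < l →
      δ * ‖projPerp b k.val (b k)‖ ^ 2 ≤ ‖projPerp b k.val (b l)‖ ^ 2) :
    ∀ k l : Fin n, k < l → δ ^ (n - 1) * Pot b ≤ Pot (insertFam b k l) := by
  intro k l hkl
  have hδ0 : 0 ≤ δ := (Real.rpow_nonneg (by norm_num) _).trans hδ1.le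
  calc δ ^ (n - 1) * Pot b ≤ δ ^ ((l : ℕ) - k) * Pot b := by
        have hln := l.isLt
        exact mul_le_mul_of_nonneg_right (pow_le_pow_of_le_one hδ0 hδ2 (by omega))
          (by rw [Pot]; positivity)
    _ ≤ Pot (insertFam b k l) :=
        pow_mul_Pot_le_Pot_insertFam b hkl hδ0 fun j _ hjl => hdeep j l hjl

/-- for δ ∈ (4^{-1/(n-1)}, 1], a δ-DeepLLL reduced basis is δ^{n-1}-PotLLL reduced. -/
theorem deepLLL_is_potLLL {n m : ℕ} (b : Fin n → EuclideanSpace ℝ (Fin m))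
    (hLI : LinearIndependent ℝ b) (δ : ℝ)
    (hδ1 : (4 : ℝ) ^ (-(1 : ℝ) / ((n : ℝ) - 1)) < δ) (hδ2 : δ ≤ 1)
    (hsize : SizeReduced b)
    (hdeep : ∀ k l : Fin n, k < l →
      δ * ‖projPerp b k.val (b k)‖ ^ 2 ≤ ‖projPerp b k.val (b l)‖ ^ 2) :
    ∀ k l : Fin n, k < l → δ ^ (n - 1) * Pot b ≤ Pot (insertFam b k l) :=
  deepLLL_is_potLLL_general b δ hδ1 hδ2 hdeep
end

section
/- For the critical basis A_n(α) with α = √(3/4) and 1 ≤ j ≤ i ≤ n, one has ‖π_j(b_i)‖² = α^{2(j−1)}·( (1/4)·∑_{ℓ=0}^{i−j−1} α^{2ℓ} + α^{2(i−j)} ) = α^{2(j−1)} = ‖π_j(b_j)‖². In particular, the rows of A_n(√(3/4)) form a 1-DeepLLL reduced basis. -/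
open Finset

/-- The critical basis A_n(α): lower-triangular, row i (0-based) has diagonal entry α^i and
entries α^j/2 in columns j < i. -/
noncomputable def critA (n : ℕ) (α : ℝ) : Fin n → EuclideanSpace ℝ (Fin n) :=
  fun i => WithLp.toLp 2 (fun j => if j = i then α ^ (i : ℕ)
    else if (j : ℕ) < (i : ℕ) then α ^ (j : ℕ) / 2 else 0 : Fin n → ℝ)

/-!
The first `j` rows of a lower-triangular matrix with nonzero diagonal span exactly the first `j`
coordinate axes, so `π_j` just erases the first `j` coordinates. For `A_n(α)` this gives
`b_j^* = α^j e_j`, hence `μ_{i,j} = 1/2`, and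
`‖π_j(b_i)‖² = ∑_{j ≤ k < i} α^{2k}/4 + α^{2i}`. When `α² = 3/4` we have `1/4 = 1 - α²`, so this
geometric sum telescopes to `α^{2j}`.
-/
section LowerTriangular

variable {n : ℕ} {b : Fin n → EuclideanSpace ℝ (Fin n)}

lemma apply_eq_zero_of_mem_span_rows (hb : ∀ i t : Fin n, i < t → b i t = 0) {j : ℕ}
    {w : EuclideanSpace ℝ (Fin n)} (hw : w ∈ Submodule.span ℝ (b '' {i | (i : ℕ) < j}))
    {t : Fin n} (ht : j ≤ t) : w t = 0 := by
  induction hw using Submodule.span_induction with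
  | mem x hx =>
    obtain ⟨i, hi, rfl⟩ := hx
    exact hb i t (Fin.lt_def.2 (lt_of_lt_of_le hi ht))
  | zero => rfl
  | add x y _ _ hx hy => simp [hx, hy]
  | smul c x _ hx => simp [hx]

lemma mem_span_rows_of_apply_eq_zero (hb : ∀ i t : Fin n, i < t → b i t = 0)
    (hdiag : ∀ i, b i i ≠ 0) (j : ℕ) {x : EuclideanSpace ℝ (Fin n)}
    (hx : ∀ t : Fin n, j ≤ t → x t = 0) : x ∈ Submodule.span ℝ (b '' {i | (i : ℕ) < j}) := by
  induction j generalizing x with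
  | zero =>
    obtain rfl : x = 0 := by ext t; exact hx t t.val.zero_le
    exact zero_mem _
  | succ j ih =>
    have hmono : Submodule.span ℝ (b '' {i | (i : ℕ) < j}) ≤
        Submodule.span ℝ (b '' {i | (i : ℕ) < j + 1}) :=
      Submodule.span_mono (Set.image_mono fun i (hi : (i : ℕ) < j) => Nat.lt_succ_of_lt hi)
    by_cases hj : j < n
    · set t : Fin n := ⟨j, hj⟩
      -- Gaussian elimination: clear coordinate `j` with row `j`, which vanishes beyond it.
      have hy : x - (x t / b t t) • b t ∈ Submodule.span ℝ (b '' {i | (i : ℕ) < j}) := by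
        refine ih fun s hs => ?_
        rcases (show t ≤ s from hs).eq_or_lt with rfl | hts
        · simp [hdiag]
        · simp [hx s hts, hb t s hts]
      have hbt : b t ∈ Submodule.span ℝ (b '' {i | (i : ℕ) < j + 1}) :=
        Submodule.subset_span ⟨t, Nat.lt_succ_self j, rfl⟩
      simpa using Submodule.add_mem _ (hmono hy) (Submodule.smul_mem _ (x t / b t t) hbt)
    · exact hmono (ih fun s hs => absurd (by omega) hj)

theorem projPerp_apply_of_lowerTriangular (hb : ∀ i t : Fin n, i < t → b i t = 0)
    (hdiag : ∀ i, b i i ≠ 0) (j : ℕ) (x : EuclideanSpace ℝ (Fin n)) (s : Fin n) :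
    projPerp b j x s = if (s : ℕ) < j then 0 else x s := by
  set p : EuclideanSpace ℝ (Fin n) := WithLp.toLp 2 fun t => if (t : ℕ) < j then x t else 0
  have hp : (Submodule.span ℝ (b '' {i | (i : ℕ) < j})).starProjection x = p := by
    refine Submodule.eq_starProjection_of_mem_of_inner_eq_zero
      (mem_span_rows_of_apply_eq_zero hb hdiag j fun t ht => by simp [p, not_lt.2 ht])
      fun w hw => Finset.sum_eq_zero fun t _ => ?_
    by_cases ht : (t : ℕ) < j
    · simp [p, ht]
    · simp [apply_eq_zero_of_mem_span_rows hb hw (not_lt.1 ht)]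
  rw [projPerp, Submodule.coe_orthogonalProjectionOnto_apply, hp]
  by_cases hs : (s : ℕ) < j <;> simp [p, hs]

end LowerTriangular

section CriticalBasis

variable {n : ℕ} {α : ℝ}

lemma critA_apply_of_lt {i t : Fin n} (h : i < t) : critA n α i t = 0 := by
  simp [critA, h.ne', not_lt.2 h.le]

lemma critA_apply_self (i : Fin n) : critA n α i i = α ^ (i : ℕ) := by
  simp [critA]

lemma critA_apply_of_gt {i t : Fin n} (h : t < i) : critA n α i t = α ^ (t : ℕ) / 2 := by
  simp [critA, h.ne, not_le.2 h]

lemma projPerp_critA_apply (hα : α ≠ 0) (j : ℕ) (x : EuclideanSpace ℝ (Fin n)) (s : Fin n) :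
    projPerp (critA n α) j x s = if (s : ℕ) < j then 0 else x s :=
  projPerp_apply_of_lowerTriangular (fun _ _ => critA_apply_of_lt)
    (fun i => by rw [critA_apply_self]; exact pow_ne_zero _ hα) j x s

lemma bstar_critA (hα : α ≠ 0) (j : Fin n) :
    bstar (critA n α) j = EuclideanSpace.single j (α ^ (j : ℕ)) := by
  ext s
  rw [bstar, projPerp_critA_apply hα, PiLp.single_apply]
  rcases lt_trichotomy s j with hs | rfl | hs
  · simp [hs.ne, Fin.lt_def.1 hs]
  · simp [critA_apply_self]
  · simp [hs.ne', not_lt.2 (Fin.le_def.1 hs.le), critA_apply_of_lt hs]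

lemma mu_critA (hα : α ≠ 0) {i j : Fin n} (h : j < i) : mu (critA n α) i j = 1 / 2 := by
  have hαj : α ^ (j : ℕ) ≠ 0 := pow_ne_zero _ hα
  simp only [mu, bstar_critA hα, EuclideanSpace.inner_single_right, critA_apply_of_gt h,
    PiLp.single_apply, if_true, conj_trivial]
  field_simp

lemma norm_projPerp_critA_sq_eq_sum_Ico (hα : α ≠ 0) {j i : Fin n} (hji : j ≤ i) :
    ‖projPerp (critA n α) j (critA n α i)‖ ^ 2 =
      ∑ k ∈ Finset.Ico (j : ℕ) i, (α ^ k / 2) ^ 2 + (α ^ (i : ℕ)) ^ 2 := by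
  simp only [EuclideanSpace.real_norm_sq_eq, projPerp_critA_apply hα]
  have hsupp : ∀ s ∉ Finset.Icc j i,
      (if (s : ℕ) < j then 0 else critA n α i s) ^ 2 = 0 := by
    intro s hs
    rcases not_and_or.1 (Finset.mem_Icc.not.1 hs) with hs | hs
    · simp [Fin.lt_def.1 (not_le.1 hs)]
    · simp [critA_apply_of_lt (not_le.1 hs)]
  rw [← Finset.sum_subset (Finset.subset_univ _) fun s _ hs => hsupp s hs,
    ← Finset.Ico_insert_right hji, Finset.sum_insert Finset.right_notMem_Ico,
    add_comm, ← Fin.map_valEmbedding_Ico, Finset.sum_map]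
  congr 1
  · refine Finset.sum_congr rfl fun s hs => ?_
    obtain ⟨hjs, hsi⟩ := Finset.mem_Ico.1 hs
    simp [not_lt.2 hjs, critA_apply_of_gt hsi]
  · simp [not_lt.2 hji, critA_apply_self]

theorem norm_projPerp_critA_sq (hα : α ≠ 0) {j i : Fin n} (hji : j ≤ i) :
    ‖projPerp (critA n α) j (critA n α i)‖ ^ 2 =
      α ^ (2 * (j : ℕ)) * ((1 / 4) * ∑ t ∈ Finset.range ((i : ℕ) - (j : ℕ)), α ^ (2 * t) +
        α ^ (2 * ((i : ℕ) - (j : ℕ)))) := by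
  obtain ⟨d, hd⟩ := Nat.exists_eq_add_of_le (Fin.le_def.1 hji)
  rw [norm_projPerp_critA_sq_eq_sum_Ico hα hji, Finset.sum_Ico_eq_sum_range, hd,
    Nat.add_sub_cancel_left, mul_add, Finset.mul_sum, Finset.mul_sum]
  congr 1
  · exact Finset.sum_congr rfl fun t _ => by ring
  · ring

theorem norm_projPerp_critA_sq_of_sq_eq (hα : α ^ 2 = 3 / 4) {j i : Fin n} (hji : j ≤ i) :
    ‖projPerp (critA n α) j (critA n α i)‖ ^ 2 = α ^ (2 * (j : ℕ)) := by
  have hα0 : α ≠ 0 := by rintro rfl; norm_num at hα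
  rw [norm_projPerp_critA_sq hα0 hji]
  simp only [pow_mul, hα]
  -- `1 / 4 = 1 - α ^ 2`, so the geometric sum telescopes.
  linear_combination (3 / 4 : ℝ) ^ (j : ℕ) * mul_neg_geom_sum (3 / 4 : ℝ) ((i : ℕ) - (j : ℕ))

end CriticalBasis

/-- for α = √(3/4) and j ≤ i,
‖π_j(b_i)‖² = α^{2(j-1)}((1/4)∑_{ℓ=0}^{i-j-1} α^{2ℓ} + α^{2(i-j)}) = α^{2(j-1)} = ‖π_j(b_j)‖²
(1-based); in particular the rows of A_n(√(3/4)) form a 1-DeepLLL reduced basis. -/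
theorem critA_proj_norms (n : ℕ) (α : ℝ) (hα : α = Real.sqrt (3/4)) :
    (∀ j i : Fin n, j ≤ i →
      ‖projPerp (critA n α) j.val (critA n α i)‖ ^ 2 =
        α ^ (2 * (j : ℕ)) *
          ((1/4) * ∑ t ∈ Finset.range ((i : ℕ) - (j : ℕ)), α ^ (2 * t) +
            α ^ (2 * ((i : ℕ) - (j : ℕ)))) ∧
      ‖projPerp (critA n α) j.val (critA n α i)‖ ^ 2 = α ^ (2 * (j : ℕ)) ∧
      ‖projPerp (critA n α) j.val (critA n α i)‖ ^ 2 =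
        ‖projPerp (critA n α) j.val (critA n α j)‖ ^ 2) ∧
    SizeReduced (critA n α) ∧
    (∀ k l : Fin n, k < l →
      ‖projPerp (critA n α) k.val (critA n α k)‖ ^ 2 ≤
        ‖projPerp (critA n α) k.val (critA n α l)‖ ^ 2) := by
  have hα2 : α ^ 2 = 3 / 4 := hα ▸ Real.sq_sqrt (by norm_num)
  have hα0 : α ≠ 0 := by rw [hα]; positivity
  have hnorm {j i : Fin n} (hji : j ≤ i) := norm_projPerp_critA_sq_of_sq_eq hα2 hji
  refine ⟨fun j i hji => ⟨norm_projPerp_critA_sq hα0 hji, hnorm hji, ?_⟩, fun i j hji => ?_,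
    fun k l hkl => ?_⟩
  · rw [hnorm hji, hnorm le_rfl]
  · rw [mu_critA hα0 hji]
    norm_num
  · rw [hnorm hkl.le, hnorm le_rfl]
end

section
/- A δ-LLL reduced basis B = [b_1,…,b_n] satisfies ‖b_1‖ ≤ (δ − 1/4)^{−(n−1)/4} · vol(L(B))^{1/n}. -/
/-!
Write `b*ᵢ` for the Gram–Schmidt vectors and `α = δ - 1/4`. Since `π_k(b_{k+1}) = b*_{k+1} + μ_{k+1,k} b*_k`
is an orthogonal sum, size reduction (`μ² ≤ 1/4`) turns the Lovász condition into Siegel's condition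
`α ‖b*_k‖² ≤ ‖b*_{k+1}‖²`. Iterating from `b*_0 = b_0` gives `αⁱ ‖b_0‖² ≤ ‖b*_i‖²`, and the product over
`i < n` gives `α^{n(n-1)/2} ‖b_0‖^{2n} ≤ vol²`; taking `2n`-th roots is the claim.
-/

open Finset

open scoped RealInnerProductSpace

theorem Submodule.mem_of_mem_sup_span_singleton_of_inner_eq_zero {E : Type*}
    [NormedAddCommGroup E] [InnerProductSpace ℝ E] {K : Submodule ℝ E} {u v : E}
    (hu : u ∈ Kᗮ) (hv : v ∈ K ⊔ ℝ ∙ u) (hvu : ⟪v, u⟫ = 0) : v ∈ K := by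
  obtain ⟨w, hw, z, hz, rfl⟩ := Submodule.mem_sup.1 hv
  obtain ⟨c, rfl⟩ := Submodule.mem_span_singleton.1 hz
  have hc : c * ⟪u, u⟫ = 0 := by
    rwa [inner_add_left, real_inner_smul_left, hu w hw, zero_add] at hvu
  rcases mul_eq_zero.1 hc with rfl | hu0
  · simpa using hw
  · simpa [inner_self_eq_zero.1 hu0] using hw

namespace LLL

variable {n m : ℕ} (b : Fin n → EuclideanSpace ℝ (Fin m))

noncomputable def prefixSpan (j : ℕ) : Submodule ℝ (EuclideanSpace ℝ (Fin m)) :=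
  Submodule.span ℝ (b '' {i | (i : ℕ) < j})

theorem projPerp_def (j : ℕ) (x : EuclideanSpace ℝ (Fin m)) :
    projPerp b j x = x - (prefixSpan b j).starProjection x :=
  rfl

theorem prefixSpan_mono {j j' : ℕ} (h : j ≤ j') : prefixSpan b j ≤ prefixSpan b j' :=
  Submodule.span_mono (Set.image_mono fun _ hi => lt_of_lt_of_le hi h)

theorem projPerp_eq_of_sub_mem {j : ℕ} {x y : EuclideanSpace ℝ (Fin m)}
    (hx : x - y ∈ prefixSpan b j) (hy : y ∈ (prefixSpan b j)ᗮ) : projPerp b j x = y := by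
  rw [projPerp_def, Submodule.eq_starProjection_of_mem_orthogonal' hx hy (by abel)]
  abel

theorem sub_projPerp_mem (j : ℕ) (x : EuclideanSpace ℝ (Fin m)) :
    x - projPerp b j x ∈ prefixSpan b j := by
  rw [projPerp_def, sub_sub_cancel]
  exact Submodule.starProjection_apply_mem _ x

theorem projPerp_mem_orthogonal (j : ℕ) (x : EuclideanSpace ℝ (Fin m)) :
    projPerp b j x ∈ (prefixSpan b j)ᗮ :=
  Submodule.sub_starProjection_mem_orthogonal x

theorem sub_bstar_mem (i : Fin n) : b i - bstar b i ∈ prefixSpan b i :=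
  sub_projPerp_mem b i (b i)

theorem bstar_mem_orthogonal (i : Fin n) : bstar b i ∈ (prefixSpan b i)ᗮ :=
  projPerp_mem_orthogonal b i (b i)

theorem bstar_mem_prefixSpan_succ (i : Fin n) : bstar b i ∈ prefixSpan b (i + 1) := by
  have hb : b i ∈ prefixSpan b (i + 1) := Submodule.subset_span ⟨i, Nat.lt_succ_self _, rfl⟩
  have h := Submodule.sub_mem _ hb (prefixSpan_mono b (Nat.le_succ _) (sub_bstar_mem b i))
  rwa [sub_sub_cancel] at h

theorem inner_bstar_eq_zero {i j : Fin n} (h : j < i) : ⟪bstar b j, bstar b i⟫ = 0 :=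
  bstar_mem_orthogonal b i _ (prefixSpan_mono b h (bstar_mem_prefixSpan_succ b j))

theorem bstar_zero (hn : 0 < n) : bstar b ⟨0, hn⟩ = b ⟨0, hn⟩ :=
  projPerp_eq_of_sub_mem b (by simp) (by simp [prefixSpan])

theorem prefixSpan_succ_le (j : Fin n) :
    prefixSpan b (j + 1) ≤ prefixSpan b j ⊔ ℝ ∙ bstar b j := by
  refine Submodule.span_le.2 ?_
  rintro _ ⟨l, hl : (l : ℕ) < j + 1, rfl⟩
  rcases Nat.lt_succ_iff_lt_or_eq.1 hl with hlj | hlj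
  · exact Submodule.mem_sup_left (Submodule.subset_span ⟨l, hlj, rfl⟩)
  · obtain rfl : l = j := Fin.ext hlj
    rw [← sub_add_cancel (b l) (bstar b l)]
    exact Submodule.add_mem_sup (sub_bstar_mem b l) (Submodule.mem_span_singleton_self _)

-- No nondegeneracy needed: if `bstar b j = 0`, both sides vanish since `x / 0 = 0`.
theorem mu_mul_inner_self (i j : Fin n) :
    mu b i j * ⟪bstar b j, bstar b j⟫ = ⟪b i, bstar b j⟫ :=
  div_mul_cancel_of_imp fun h => by rw [inner_self_eq_zero.1 h, inner_zero_right]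

variable {b} {i j : Fin n}

theorem projPerp_of_eq_succ (hij : (i : ℕ) = j + 1) :
    projPerp b j (b i) = bstar b i + mu b i j • bstar b j := by
  have hji : j < i := by rw [Fin.lt_def, hij]; exact Nat.lt_succ_self j
  refine projPerp_eq_of_sub_mem b ?_ (Submodule.add_mem _ ?_ ?_)
  · have hmem : b i - (bstar b i + mu b i j • bstar b j) ∈ prefixSpan b (j + 1) := by
      rw [← sub_sub, ← hij]
      exact Submodule.sub_mem _ (sub_bstar_mem b i)
        (Submodule.smul_mem _ _ (hij ▸ bstar_mem_prefixSpan_succ b j))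
    refine Submodule.mem_of_mem_sup_span_singleton_of_inner_eq_zero
      (bstar_mem_orthogonal b j) (prefixSpan_succ_le b j hmem) ?_
    rw [inner_sub_left, inner_add_left, real_inner_smul_left, mu_mul_inner_self,
      real_inner_comm (bstar b j) (bstar b i), inner_bstar_eq_zero b hji]
    ring
  · exact Submodule.orthogonal_le (prefixSpan_mono b hji.le) (bstar_mem_orthogonal b i)
  · exact Submodule.smul_mem _ _ (bstar_mem_orthogonal b j)

theorem sq_norm_projPerp_of_eq_succ (hij : (i : ℕ) = j + 1) :
    ‖projPerp b j (b i)‖ ^ 2 = ‖bstar b i‖ ^ 2 + mu b i j ^ 2 * ‖bstar b j‖ ^ 2 := by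
  have hji : j < i := by rw [Fin.lt_def, hij]; exact Nat.lt_succ_self j
  have horth : ⟪bstar b i, mu b i j • bstar b j⟫ = 0 := by
    rw [real_inner_smul_right, real_inner_comm, inner_bstar_eq_zero b hji, mul_zero]
  rw [projPerp_of_eq_succ hij, norm_add_sq_real, horth, norm_smul, mul_pow, Real.norm_eq_abs,
    sq_abs]
  ring

theorem siegel_of_lovasz {δ : ℝ} (hij : (i : ℕ) = j + 1) (hmu : |mu b i j| ≤ 1 / 2)
    (hlovasz : δ * ‖bstar b j‖ ^ 2 ≤ ‖projPerp b j (b i)‖ ^ 2) :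
    (δ - 1 / 4) * ‖bstar b j‖ ^ 2 ≤ ‖bstar b i‖ ^ 2 := by
  have hmu2 : mu b i j ^ 2 ≤ 1 / 4 := by
    rw [← sq_abs]
    nlinarith [abs_nonneg (mu b i j)]
  rw [sq_norm_projPerp_of_eq_succ hij] at hlovasz
  nlinarith [sq_nonneg ‖bstar b j‖]

end LLL

theorem pow_mul_le_of_mul_le_succ {n : ℕ} {f : Fin n → ℝ} {c : ℝ} (hc : 0 ≤ c)
    (h : ∀ k (hk : k + 1 < n), c * f ⟨k, Nat.lt_of_succ_lt hk⟩ ≤ f ⟨k + 1, hk⟩) (i : Fin n) :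
    c ^ (i : ℕ) * f ⟨0, i.pos⟩ ≤ f i := by
  obtain ⟨i, hi⟩ := i
  induction i with
  | zero => simp
  | succ k ih =>
    calc c ^ (k + 1) * f ⟨0, hi.pos⟩ = c * (c ^ k * f ⟨0, hi.pos⟩) := by ring
      _ ≤ c * f ⟨k, Nat.lt_of_succ_lt hi⟩ := mul_le_mul_of_nonneg_left (ih _) hc
      _ ≤ f ⟨k + 1, hi⟩ := h k hi

theorem two_mul_sum_fin_val (n : ℕ) : 2 * ∑ i : Fin n, (i : ℕ) = n * (n - 1) := by
  rw [Fin.sum_univ_eq_sum_range (fun i => i), mul_comm, sum_range_id_mul_two]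

theorem pow_mul_pow_sum_le_prod {n : ℕ} {c x : ℝ} {f : Fin n → ℝ} (hc : 0 ≤ c) (hx : 0 ≤ x)
    (h : ∀ i : Fin n, c ^ (i : ℕ) * x ≤ f i) :
    c ^ (∑ i : Fin n, (i : ℕ)) * x ^ n ≤ ∏ i, f i := by
  calc c ^ (∑ i : Fin n, (i : ℕ)) * x ^ n = ∏ i : Fin n, c ^ (i : ℕ) * x := by
        rw [prod_mul_distrib, prod_pow_eq_pow_sum, prod_const,
          card_univ, Fintype.card_fin]
    _ ≤ ∏ i, f i := prod_le_prod (fun i _ => by positivity) (fun i _ => h i)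

theorem le_rpow_mul_rpow_of_pow_mul_pow_le {n s : ℕ} (hn : 0 < n) (hs : 2 * s = n * (n - 1))
    {c x P : ℝ} (hc : 0 < c) (hx : 0 ≤ x) (hP : 0 ≤ P) (h : c ^ s * x ^ (2 * n) ≤ P ^ 2) :
    x ≤ c ^ (-(((n : ℝ) - 1) / 4)) * P ^ ((1 : ℝ) / n) := by
  have hs' : (s : ℝ) = n * (n - 1) / 2 := by
    have : ((2 * s : ℕ) : ℝ) = ((n * (n - 1) : ℕ) : ℝ) := congrArg _ hs
    push_cast [Nat.cast_sub hn] at this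
    linarith
  have hpow : (c ^ (-(((n : ℝ) - 1) / 4)) * P ^ ((1 : ℝ) / n)) ^ (2 * n) = (c ^ s)⁻¹ * P ^ 2 := by
    rw [mul_pow, ← Real.rpow_natCast _ (2 * n), ← Real.rpow_natCast (P ^ _) (2 * n),
      ← Real.rpow_mul hc.le, ← Real.rpow_mul hP, ← Real.rpow_natCast P 2,
      ← Real.rpow_natCast c s, ← Real.rpow_neg hc.le]
    congr 2
    · push_cast; rw [hs']; ring
    · have : (n : ℝ) ≠ 0 := by positivity
      push_cast; field_simp
  rw [← pow_le_pow_iff_left₀ hx (by positivity) (by omega : 2 * n ≠ 0), hpow,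
    inv_mul_eq_div, le_div_iff₀ (by positivity), mul_comm]
  exact h

theorem le_rpow_mul_prod_rpow_of_pow_mul_sq_le {n : ℕ} (hn : 0 < n) {c x : ℝ} {f : Fin n → ℝ}
    (hc : 0 < c) (hx : 0 ≤ x) (hf : ∀ i, 0 ≤ f i) (h : ∀ i : Fin n, c ^ (i : ℕ) * x ^ 2 ≤ f i ^ 2) :
    x ≤ c ^ (-(((n : ℝ) - 1) / 4)) * (∏ i, f i) ^ ((1 : ℝ) / n) := by
  refine le_rpow_mul_rpow_of_pow_mul_pow_le hn (two_mul_sum_fin_val n) hc hx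
    (prod_nonneg fun i _ => hf i) ?_
  rw [pow_mul, ← prod_pow]
  exact pow_mul_pow_sum_le_prod hc.le (sq_nonneg x) h

theorem LLL_hermite_bound_general {n m : ℕ} (hn : 0 < n) (b : Fin n → EuclideanSpace ℝ (Fin m))
    (δ : ℝ) (hδ1 : 1/4 < δ)
    (hsize : SizeReduced b)
    (hlovasz : ∀ k : ℕ, (hk : k + 1 < n) →
      δ * ‖projPerp b k (b ⟨k, Nat.lt_of_succ_lt hk⟩)‖ ^ 2 ≤
        ‖projPerp b k (b ⟨k + 1, hk⟩)‖ ^ 2) :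
    ‖b ⟨0, hn⟩‖ ≤
      (δ - 1/4) ^ (-(((n : ℝ) - 1) / 4)) *
        (∏ i : Fin n, ‖bstar b i‖) ^ ((1 : ℝ) / (n : ℝ)) := by
  have hα : 0 < δ - 1 / 4 := by linarith
  have hsiegel : ∀ k (hk : k + 1 < n), (δ - 1 / 4) * ‖bstar b ⟨k, Nat.lt_of_succ_lt hk⟩‖ ^ 2 ≤
      ‖bstar b ⟨k + 1, hk⟩‖ ^ 2 := fun k hk =>
    LLL.siegel_of_lovasz rfl (hsize _ _ (Nat.lt_succ_self k)) (hlovasz k hk)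
  rw [← LLL.bstar_zero b hn]
  exact le_rpow_mul_prod_rpow_of_pow_mul_sq_le hn hα (norm_nonneg _)
    (fun i => norm_nonneg _)
    (pow_mul_le_of_mul_le_succ (f := fun i => ‖bstar b i‖ ^ 2) hα.le hsiegel)

/-- a δ-LLL reduced basis satisfies
‖b_1‖ ≤ (δ - 1/4)^{-(n-1)/4} · vol(L(B))^{1/n}. -/
theorem LLL_hermite_bound {n m : ℕ} (hn : 0 < n) (b : Fin n → EuclideanSpace ℝ (Fin m))
    (hLI : LinearIndependent ℝ b) (δ : ℝ) (hδ1 : 1/4 < δ) (hδ2 : δ ≤ 1)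
    (hsize : SizeReduced b)
    (hlovasz : ∀ k : ℕ, (hk : k + 1 < n) →
      δ * ‖projPerp b k (b ⟨k, Nat.lt_of_succ_lt hk⟩)‖ ^ 2 ≤
        ‖projPerp b k (b ⟨k + 1, hk⟩)‖ ^ 2) :
    ‖b ⟨0, hn⟩‖ ≤
      (δ - 1/4) ^ (-(((n : ℝ) - 1) / 4)) *
        (∏ i : Fin n, ‖bstar b i‖) ^ ((1 : ℝ) / (n : ℝ)) :=
  LLL_hermite_bound_general hn b δ hδ1 hsize hlovasz
end
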